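/- Let G, H, J : I × ℝ → ℝ be C¹ functions, 2π-periodic in the second variable θ, on I × ℝ with I ⊂ (0,∞) an interval containing t₀, satisfying (∂/∂t − ∂/∂θ)(G + H) = J, (∂/∂t + ∂/∂θ)(G − H) = J, G ≥ 0, |H| ≤ G, and J(t,θ) ≤ G(t,θ)/t everywhere. Then for all t ∈ I with t ≥ t₀: sup_θ G(t, θ) ≤ 2·[sup_θ G(t₀, θ) + sup_θ |H(t₀, θ)|]·(t/t₀). -/

import Mathlib

open Real Set

/-- Partial derivative with respect to the first (time) variable. -/
noncomputable def pd1 (f : ℝ → ℝ → ℝ) (t θ : ℝ) : ℝ := deriv (fun s => f s θ) t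

/-- Partial derivative with respect to the second (space) variable. -/
noncomputable def pd2 (f : ℝ → ℝ → ℝ) (t θ : ℝ) : ℝ := deriv (fun x => f t x) θ

/-!
Along the characteristic lines `θ + t = const` and `θ - t = const` the quantities `G + H` and
`G - H` grow at rate `J ≤ G / t ≤ (sup G) / t`. Since `G` is the average of `G + H` and `G - H`,
`E(t) = sup_θ G(t, ·)` satisfies `E(t) ≤ A + ∫_{t₀}^t E(s) / s ds` with `A` the initial bound, and
Gronwall's lemma turns this into `E(t) ≤ A t / t₀`: `(A + ∫_{t₀}^t E/s) / t` is nonincreasing.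
-/

open Function MeasureTheory

theorem continuous_iSup_of_periodic {X α : Type*} [TopologicalSpace X]
    [ConditionallyCompleteLinearOrder α] [TopologicalSpace α] [OrderTopology α]
    {F : X → ℝ → α} {c : ℝ} (hc : c ≠ 0) (hF : Continuous (uncurry F))
    (hper : ∀ x, Periodic (F x) c) : Continuous fun x => ⨆ θ, F x θ := by
  have hsup : (fun x => ⨆ θ, F x θ) = fun x => sSup (F x '' uIcc 0 (0 + c)) := by
    funext x
    rw [(hper x).image_uIcc hc, sSup_range]
  exact hsup ▸ isCompact_uIcc.continuous_sSup hF

section PartialDerivatives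

variable {F : ℝ → ℝ → ℝ} {t θ : ℝ}

theorem pd1_eq_fderiv (hF : DifferentiableAt ℝ (uncurry F) (t, θ)) :
    pd1 F t θ = fderiv ℝ (uncurry F) (t, θ) (1, 0) := by
  have h := hF.hasFDerivAt.comp_hasDerivAt t ((hasDerivAt_id t).prodMk (hasDerivAt_const t θ))
  exact h.deriv

theorem pd2_eq_fderiv (hF : DifferentiableAt ℝ (uncurry F) (t, θ)) :
    pd2 F t θ = fderiv ℝ (uncurry F) (t, θ) (0, 1) := by
  have h := hF.hasFDerivAt.comp_hasDerivAt θ ((hasDerivAt_const θ t).prodMk (hasDerivAt_id θ))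
  exact h.deriv

theorem hasDerivAt_comp_graph {y : ℝ → ℝ} {c : ℝ}
    (hF : DifferentiableAt ℝ (uncurry F) (t, y t)) (hy : HasDerivAt y c t) :
    HasDerivAt (fun s => F s (y s)) (pd1 F t (y t) + c * pd2 F t (y t)) t := by
  have h := hF.hasFDerivAt.comp_hasDerivAt t ((hasDerivAt_id t).prodMk hy)
  rwa [show ((1 : ℝ), c) = (1, 0) + c • (0, 1) by simp, map_add, map_smul,
    ← pd1_eq_fderiv hF, ← pd2_eq_fderiv hF, smul_eq_mul] at h

theorem sub_le_integral_of_transport_le {g : ℝ → ℝ} {c a b : ℝ}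
    (hF : Differentiable ℝ (uncurry F)) (hab : a ≤ b) (hg : IntegrableOn g (Icc a b))
    (hle : ∀ s ∈ Ioo a b,
      pd1 F s (θ + c * (s - b)) + c * pd2 F s (θ + c * (s - b)) ≤ g s) :
    F b θ - F a (θ + c * (a - b)) ≤ ∫ s in a..b, g s := by
  have hderiv : ∀ s, HasDerivAt (fun u => F u (θ + c * (u - b)))
      (pd1 F s (θ + c * (s - b)) + c * pd2 F s (θ + c * (s - b))) s := fun s =>
    hasDerivAt_comp_graph (hF _)
      (by simpa using (((hasDerivAt_id s).sub_const b).const_mul c).const_add θ)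
  simpa using intervalIntegral.sub_le_integral_of_hasDeriv_right_of_le hab
    (fun s _ => (hderiv s).continuousAt.continuousWithinAt)
    (fun s _ => (hderiv s).hasDerivWithinAt) hg hle

end PartialDerivatives

theorem le_add_integral_of_characteristics {G H J : ℝ → ℝ → ℝ} {g : ℝ → ℝ} {A a b : ℝ}
    (hG : Differentiable ℝ (uncurry G)) (hH : Differentiable ℝ (uncurry H)) (hab : a ≤ b)
    (hg : IntegrableOn g (Icc a b))
    (hminus : ∀ s ∈ Ioo a b, ∀ θ : ℝ,
      pd1 (fun t θ => G t θ + H t θ) s θ - pd2 (fun t θ => G t θ + H t θ) s θ = J s θ)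
    (hplus : ∀ s ∈ Ioo a b, ∀ θ : ℝ,
      pd1 (fun t θ => G t θ - H t θ) s θ + pd2 (fun t θ => G t θ - H t θ) s θ = J s θ)
    (hJ : ∀ s ∈ Ioo a b, ∀ θ : ℝ, J s θ ≤ g s) (hA : ∀ θ : ℝ, G a θ + |H a θ| ≤ A) (θ : ℝ) :
    G b θ ≤ A + ∫ s in a..b, g s := by
  have hsum := sub_le_integral_of_transport_le (F := fun t θ => G t θ + H t θ) (θ := θ)
    (c := -1) (hG.add hH) hab hg fun s hs => by
      linarith [hminus s hs (θ + -1 * (s - b)), hJ s hs (θ + -1 * (s - b))]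
  have hdiff := sub_le_integral_of_transport_le (F := fun t θ => G t θ - H t θ) (θ := θ)
    (c := 1) (hG.sub hH) hab hg fun s hs => by
      linarith [hplus s hs (θ + 1 * (s - b)), hJ s hs (θ + 1 * (s - b))]
  have hA₁ := hA (θ + -1 * (a - b))
  have hA₂ := hA (θ + 1 * (a - b))
  linarith [le_abs_self (H a (θ + -1 * (a - b))), neg_abs_le (H a (θ + 1 * (a - b)))]

theorem le_mul_div_of_le_add_integral_div {u : ℝ → ℝ} {A a b : ℝ} (ha : 0 < a) (hab : a ≤ b)
    (hu : ContinuousOn u (Icc a b)) (hle : ∀ t ∈ Icc a b, u t ≤ A + ∫ s in a..t, u s / s) :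
    u b ≤ A * (b / a) := by
  have hpos : ∀ t ∈ Icc a b, 0 < t := fun t ht => ha.trans_le ht.1
  have hquot : ContinuousOn (fun s => u s / s) (Icc a b) :=
    hu.div continuousOn_id fun s hs => (hpos s hs).ne'
  set Ψ := fun t => A + ∫ s in a..t, u s / s
  have hΨcont : ContinuousOn Ψ (Icc a b) := by
    have hprim := intervalIntegral.continuousOn_primitive_interval (μ := volume)
      (a := a) (b := b) (uIcc_of_le hab ▸ hquot.integrableOn_Icc)
    exact continuousOn_const.add (uIcc_of_le hab ▸ hprim)
  have hΨderiv : ∀ t ∈ Ioo a b, HasDerivAt Ψ (u t / t) t := fun t ht =>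
    (intervalIntegral.integral_hasDerivAt_right
      ((hquot.mono (Icc_subset_Icc_right ht.2.le)).intervalIntegrable_of_Icc ht.1.le)
      (hquot.mono Ioo_subset_Icc_self |>.stronglyMeasurableAtFilter (μ := volume) isOpen_Ioo t ht)
      (hquot.continuousAt (Icc_mem_nhds ht.1 ht.2))).const_add A
  have hanti : AntitoneOn (fun t => Ψ t / t) (Icc a b) := by
    refine antitoneOn_of_hasDerivWithinAt_nonpos (convex_Icc a b)
      (f' := fun t => (u t / t * t - Ψ t * 1) / t ^ 2)
      (hΨcont.div continuousOn_id fun t ht => (hpos t ht).ne') (fun t ht => ?_) (fun t ht => ?_)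
    all_goals rw [interior_Icc] at ht
    · exact ((hΨderiv t ht).div (hasDerivAt_id t) (hpos t ⟨ht.1.le, ht.2.le⟩).ne').hasDerivWithinAt
    · have ht' : t ∈ Icc a b := ⟨ht.1.le, ht.2.le⟩
      rw [div_mul_cancel₀ _ (hpos t ht').ne', mul_one]
      exact div_nonpos_of_nonpos_of_nonneg (sub_nonpos.2 (hle t ht')) (sq_nonneg t)
  have hΨa : Ψ a = A := by simp [Ψ]
  have hb : Ψ b / b ≤ A / a := hΨa ▸ hanti ⟨le_rfl, hab⟩ ⟨hab, le_rfl⟩ hab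
  calc u b ≤ Ψ b := hle b ⟨hab, le_rfl⟩
    _ ≤ A / a * b := (div_le_iff₀ (hpos b ⟨hab, le_rfl⟩)).1 hb
    _ = A * (b / a) := by ring

theorem future_gronwall_energy_bound_general
    (G H J : ℝ → ℝ → ℝ) (I : Set ℝ) (hI : I ⊆ Ioi 0) (hIconn : I.OrdConnected)
    (t₀ : ℝ) (ht₀ : t₀ ∈ I)
    (hG : ContDiff ℝ 1 (Function.uncurry G))
    (hH : ContDiff ℝ 1 (Function.uncurry H))
    (hGper : ∀ t : ℝ, Function.Periodic (G t) (2*π))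
    (hHper : ∀ t : ℝ, Function.Periodic (H t) (2*π))
    (hminus : ∀ t ∈ I, ∀ θ : ℝ,
      pd1 (fun t θ => G t θ + H t θ) t θ - pd2 (fun t θ => G t θ + H t θ) t θ = J t θ)
    (hplus : ∀ t ∈ I, ∀ θ : ℝ,
      pd1 (fun t θ => G t θ - H t θ) t θ + pd2 (fun t θ => G t θ - H t θ) t θ = J t θ)
    (hGpos : ∀ t ∈ I, ∀ θ : ℝ, 0 ≤ G t θ)
    (hJG : ∀ t ∈ I, ∀ θ : ℝ, J t θ ≤ G t θ / t) :
    ∀ t ∈ I, t₀ ≤ t →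
      (⨆ θ : ℝ, G t θ) ≤
        2 * ((⨆ θ : ℝ, G t₀ θ) + (⨆ θ : ℝ, |H t₀ θ|)) * (t / t₀) := by
  intro t ht h₀t
  have hsub : ∀ {s}, s ∈ Icc t₀ t → ∀ r ∈ Ioo t₀ s, r ∈ I := fun hs r hr =>
    hIconn.out ht₀ ht ⟨hr.1.le, hr.2.le.trans hs.2⟩
  have hbddG : ∀ s, BddAbove (range (G s)) := fun s =>
    ((hGper s).compact_of_continuous two_pi_pos.ne' (hG.continuous.uncurry_left s)).bddAbove
  have hbddH : BddAbove (range fun θ => |H t₀ θ|) :=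
    (((hHper t₀).comp abs).compact_of_continuous two_pi_pos.ne'
      (continuous_abs.comp (hH.continuous.uncurry_left t₀))).bddAbove
  set A := (⨆ θ : ℝ, G t₀ θ) + ⨆ θ : ℝ, |H t₀ θ|
  have hA : ∀ θ, G t₀ θ + |H t₀ θ| ≤ A := fun θ =>
    add_le_add (le_ciSup (hbddG t₀) θ) (le_ciSup hbddH θ)
  have hA₀ : 0 ≤ A := (add_nonneg (hGpos t₀ ht₀ 0) (abs_nonneg _)).trans (hA 0)
  set E := fun s => ⨆ θ : ℝ, G s θ
  have hEcont : Continuous E := continuous_iSup_of_periodic two_pi_pos.ne' hG.continuous hGper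
  have hE_le : ∀ s ∈ Icc t₀ t, E s ≤ A + ∫ r in t₀..s, E r / r := fun s hs =>
    ciSup_le <| le_add_integral_of_characteristics (hG.differentiable one_ne_zero)
      (hH.differentiable one_ne_zero) hs.1
      ((hEcont.continuousOn.div continuousOn_id fun r hr =>
        ((hI ht₀).out.trans_le hr.1).ne').integrableOn_Icc)
      (fun r hr => hminus r (hsub hs r hr)) (fun r hr => hplus r (hsub hs r hr))
      (fun r hr θ => (hJG r (hsub hs r hr) θ).trans <|
        div_le_div_of_nonneg_right (le_ciSup (hbddG r) θ) (hI (hsub hs r hr)).out.le) hA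
  calc E t ≤ A * (t / t₀) :=
        le_mul_div_of_le_add_integral_div (hI ht₀) h₀t hEcont.continuousOn hE_le
    _ ≤ 2 * A * (t / t₀) := by
      have : 0 ≤ A * (t / t₀) := mul_nonneg hA₀ (div_nonneg (hI ht).out.le (hI ht₀).out.le)
      linarith

/-- The future-direction Gronwall bound: the key a priori estimate for global
existence in the areal time coordinate for the T³-Gowdy EMDA system. -/
theorem future_gronwall_energy_bound
    (G H J : ℝ → ℝ → ℝ) (I : Set ℝ) (hI : I ⊆ Ioi 0) (hIconn : I.OrdConnected)
    (t₀ : ℝ) (ht₀ : t₀ ∈ I)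
    (hG : ContDiff ℝ 1 (Function.uncurry G))
    (hH : ContDiff ℝ 1 (Function.uncurry H))
    (hJ : ContDiff ℝ 1 (Function.uncurry J))
    (hGper : ∀ t : ℝ, Function.Periodic (G t) (2*π))
    (hHper : ∀ t : ℝ, Function.Periodic (H t) (2*π))
    (hJper : ∀ t : ℝ, Function.Periodic (J t) (2*π))
    (hminus : ∀ t ∈ I, ∀ θ : ℝ,
      pd1 (fun t θ => G t θ + H t θ) t θ - pd2 (fun t θ => G t θ + H t θ) t θ = J t θ)
    (hplus : ∀ t ∈ I, ∀ θ : ℝ,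
      pd1 (fun t θ => G t θ - H t θ) t θ + pd2 (fun t θ => G t θ - H t θ) t θ = J t θ)
    (hGpos : ∀ t ∈ I, ∀ θ : ℝ, 0 ≤ G t θ)
    (hHG : ∀ t ∈ I, ∀ θ : ℝ, |H t θ| ≤ G t θ)
    (hJG : ∀ t ∈ I, ∀ θ : ℝ, J t θ ≤ G t θ / t) :
    ∀ t ∈ I, t₀ ≤ t →
      (⨆ θ : ℝ, G t θ) ≤
        2 * ((⨆ θ : ℝ, G t₀ θ) + (⨆ θ : ℝ, |H t₀ θ|)) * (t / t₀) :=
  future_gronwall_energy_bound_general G H J I hI hIconn t₀ ht₀ hG hH hGper hHper hminus hplus hGpos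
    hJG
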